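/- Let K be a field, n ≥ 2, and let I, J ⊂ K[x_1,…,x_n] be monomial ideals of height n. Then μ(IJ) ≥ n + (n choose 2). -/
import Mathlib


open MvPolynomial
open Pointwise

/-- The minimal number of generators of an ideal. -/
noncomputable def mu {R : Type*} [CommRing R] (I : Ideal R) : ℕ :=
  sInf {m : ℕ | ∃ s : Finset R, s.card = m ∧ Ideal.span (s : Set R) = I}

/-- A monomial ideal: an ideal generated by monomials. -/
def IsMonomialIdeal {K : Type*} [Field K] {n : ℕ} (I : Ideal (MvPolynomial (Fin n) K)) : Prop :=
  ∃ S : Set (Fin n →₀ ℕ), I = Ideal.span ((fun v => monomial v (1 : K)) '' S)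

/-- A monomial ideal of `K[x₁,…,xₙ]` has height `n` iff it is proper and contains a power of
each variable. -/
def HasMaxHeight {K : Type*} [Field K] {n : ℕ} (I : Ideal (MvPolynomial (Fin n) K)) : Prop :=
  I ≠ ⊤ ∧ ∀ i : Fin n, ∃ k : ℕ, 0 < k ∧ (X i : MvPolynomial (Fin n) K) ^ k ∈ I

section MuAuxSection
open Pointwise

namespace MuAux
variable {K : Type*} [Field K] {n : ℕ}

lemma monomial_mem_span_iff {S : Set (Fin n →₀ ℕ)} {v : Fin n →₀ ℕ} :
    (monomial v (1:K)) ∈ Ideal.span ((fun v => monomial v (1:K)) '' S) ↔ ∃ s ∈ S, s ≤ v := by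
  rw [mem_ideal_span_monomial_image]
  simp [support_monomial]

lemma span_mono_mul (S T : Set (Fin n →₀ ℕ)) :
    Ideal.span ((fun v => monomial v (1:K)) '' S) * Ideal.span ((fun v => monomial v (1:K)) '' T)
      = Ideal.span ((fun v => monomial v (1:K)) '' (S + T)) := by
  rw [Ideal.span_mul_span']
  congr 1
  ext p
  constructor
  · rintro ⟨_, ⟨a, ha, rfl⟩, _, ⟨b, hb, rfl⟩, rfl⟩
    exact ⟨a + b, ⟨a, ha, b, hb, rfl⟩, by simp [monomial_mul]⟩
  · rintro ⟨_, ⟨a, ha, b, hb, rfl⟩, rfl⟩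
    exact ⟨_, ⟨a, ha, rfl⟩, _, ⟨b, hb, rfl⟩, by simp [monomial_mul]⟩

set_option maxHeartbeats 1000000 in
lemma card_le_of_witnesses {ι : Type*} [Fintype ι] {SL : Set (Fin n →₀ ℕ)}
    {L : Ideal (MvPolynomial (Fin n) K)} (hL : L = Ideal.span ((fun v => monomial v (1:K)) '' SL))
    (s : Finset (MvPolynomial (Fin n) K)) (hs : Ideal.span (↑s : Set (MvPolynomial (Fin n) K)) = L)
    (W : ι → (Fin n →₀ ℕ)) (Winj : Function.Injective W)
    (hWmem : ∀ x, monomial (W x) (1:K) ∈ L)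
    (hWmin : ∀ x u, u ≤ W x → monomial u (1:K) ∈ L → u = W x) :
    Fintype.card ι ≤ s.card := by
  classical
  set E : Set (Fin n →₀ ℕ) := Set.range (fun k : Fin n => Finsupp.single k 1) with hE
  set mI : Ideal (MvPolynomial (Fin n) K) := Ideal.span ((fun v => monomial v (1:K)) '' E) with hmI
  set B : Ideal (MvPolynomial (Fin n) K) := mI * L with hBdef
  have hBmon : B = Ideal.span ((fun v => monomial v (1:K)) '' (E + SL)) := by
    rw [hBdef, hL, hmI, span_mono_mul]
  have hBkey : ∀ p ∈ B, ∀ v ∈ p.support, ∃ u, u ≤ v ∧ u ≠ v ∧ monomial u (1:K) ∈ L := by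
    intro p hp v hv
    rw [hBmon, mem_ideal_span_monomial_image] at hp
    obtain ⟨t, ⟨e, ⟨k, rfl⟩, uu, huu, rfl⟩, hle⟩ := hp v hv
    refine ⟨uu, le_trans le_add_self hle, ?_, ?_⟩
    · intro he
      have h1 := hle k
      rw [he] at h1
      simp [Finsupp.add_apply, Finsupp.single_apply] at h1
    · rw [hL]; exact Ideal.subset_span ⟨uu, huu, rfl⟩
  have hq0 : ∀ q : MvPolynomial (Fin n) K, constantCoeff q = 0 → q ∈ mI := by
    intro q hq
    rw [hmI, mem_ideal_span_monomial_image]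
    intro v hv
    have hvne : v ≠ 0 := by
      rintro rfl
      rw [mem_support_iff] at hv
      exact hv hq
    obtain ⟨k, hk⟩ : ∃ k, v k ≠ 0 := by
      by_contra hc; push_neg at hc; exact hvne (Finsupp.ext hc)
    exact ⟨Finsupp.single k 1, ⟨k, rfl⟩, by
      rw [Finsupp.single_le_iff]; omega⟩
  set Bk : Submodule K (MvPolynomial (Fin n) K) := Submodule.restrictScalars K B with hBk
  set mk : MvPolynomial (Fin n) K →ₗ[K] MvPolynomial (Fin n) K ⧸ Bk := Bk.mkQ with hmk
  have hmkzero : ∀ p ∈ B, mk p = 0 := by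
    intro p hp
    rw [hmk, Submodule.mkQ_apply, Submodule.Quotient.mk_eq_zero]
    exact hp
  have hspan : ∀ p ∈ L, mk p ∈ Submodule.span K (mk '' (↑s : Set (MvPolynomial (Fin n) K))) := by
    rw [← hs]
    intro p hp
    induction hp using Submodule.span_induction with
    | mem x hx => exact Submodule.subset_span ⟨x, hx, rfl⟩
    | zero => simp
    | add x y hx hy ihx ihy => rw [map_add]; exact add_mem ihx ihy
    | smul q p hp ih =>
      have hpL : p ∈ L := by rw [← hs]; exact hp
      have h1 : q • p = (constantCoeff q) • p + (q - C (constantCoeff q)) * p := by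
        rw [smul_eq_mul, smul_eq_C_mul]; ring
      have h2 : mk ((q - C (constantCoeff q)) * p) = 0 :=
        hmkzero _ (Ideal.mul_mem_mul (hq0 _ (by simp)) hpL)
      rw [h1, map_add, map_smul, h2, add_zero]
      exact Submodule.smul_mem _ _ ih
  set vfam : ι → MvPolynomial (Fin n) K ⧸ Bk := fun x => mk (monomial (W x) 1) with hvfam
  have hind : LinearIndependent K vfam := by
    rw [Fintype.linearIndependent_iff]
    intro g hg x0
    by_contra hg0
    have hsum : mk (∑ x, monomial (W x) (g x)) = 0 := by
      rw [map_sum, ← hg]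
      refine Finset.sum_congr rfl fun x _ => ?_
      rw [hvfam, ← map_smul]
      congr 1
      rw [smul_monomial, smul_eq_mul, mul_one]
    have hpB : (∑ x, monomial (W x) (g x)) ∈ B := by
      rw [hmk, Submodule.mkQ_apply, Submodule.Quotient.mk_eq_zero] at hsum
      exact hsum
    have hsup : W x0 ∈ (∑ x, monomial (W x) (g x)).support := by
      rw [mem_support_iff, coeff_sum]
      rw [Finset.sum_eq_single x0]
      · rw [coeff_monomial, if_pos rfl]; exact hg0
      · intro x _ hx
        rw [coeff_monomial, if_neg (fun h => hx (Winj h))]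
      · intro h; exact absurd (Finset.mem_univ x0) h
    obtain ⟨u, h1, h2, h3⟩ := hBkey _ hpB _ hsup
    exact h2 (hWmin x0 u h1 h3)
  set N := Submodule.span K (mk '' (↑s : Set (MvPolynomial (Fin n) K))) with hN
  have hmemN : ∀ x, vfam x ∈ N := fun x => hspan _ (hWmem x)
  set F : ι → N := fun x => ⟨vfam x, hmemN x⟩ with hF
  have hindF : LinearIndependent K F := by
    apply hind.of_comp N.subtype
  have hfin : Module.Finite K N := by
    apply FiniteDimensional.span_of_finite
    exact ((s : Set (MvPolynomial (Fin n) K)).toFinite).image _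
  have hcard : Fintype.card ι ≤ Module.finrank K N := hindF.fintype_card_le_finrank
  have hNeq : N = Submodule.span K (↑(s.image mk) : Set (MvPolynomial (Fin n) K ⧸ Bk)) := by
    rw [hN, Finset.coe_image]
  have hrank : Module.finrank K N ≤ s.card := by
    refine le_trans ?_ (Finset.card_image_le (f := mk) (s := s))
    rw [hNeq]
    exact finrank_span_finset_le_card _
  exact hcard.trans hrank

lemma mono_mem_of_le {L : Ideal (MvPolynomial (Fin n) K)} {u v : Fin n →₀ ℕ} (h : u ≤ v)
    (hu : monomial u (1:K) ∈ L) : monomial v (1:K) ∈ L := by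
  have hv : monomial v (1:K) = monomial (v - u) 1 * monomial u 1 := by
    rw [monomial_mul, one_mul, tsub_add_cancel_of_le h]
  rw [hv]; exact Ideal.mul_mem_left _ _ hu

lemma sum_lt_of_lt {u v : Fin n →₀ ℕ} (h : u ≤ v) (hne : u ≠ v) :
    ∑ i, u i < ∑ i, v i := by
  obtain ⟨i, hi⟩ : ∃ i, u i ≠ v i := by
    by_contra hc
    push_neg at hc
    exact hne (Finsupp.ext hc)
  exact Finset.sum_lt_sum (fun j _ => h j) ⟨i, Finset.mem_univ i, lt_of_le_of_ne (h i) hi⟩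

lemma exists_minimal (Q : (Fin n →₀ ℕ) → Prop) :
    ∀ d (v : Fin n →₀ ℕ), (∑ i, v i) ≤ d → Q v →
      ∃ u, u ≤ v ∧ Q u ∧ ∀ u', u' ≤ u → Q u' → u' = u := by
  intro d
  induction d with
  | zero =>
    intro v hv hQ
    refine ⟨v, le_rfl, hQ, fun u' hu' hQ' => ?_⟩
    by_contra hne
    exact absurd (sum_lt_of_lt hu' hne) (by omega)
  | succ d ih =>
    intro v hv hQ
    by_cases h : ∃ u', u' ≤ v ∧ u' ≠ v ∧ Q u'
    · obtain ⟨u', h1, h2, h3⟩ := h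
      obtain ⟨u, hu1, hu2, hu3⟩ := ih u' (by have := sum_lt_of_lt h1 h2; omega) h3
      exact ⟨u, hu1.trans h1, hu2, hu3⟩
    · exact ⟨v, le_rfl, hQ, fun u' hu' hQ' => by
        by_contra hne; exact h ⟨u', hu', hne, hQ'⟩⟩

lemma eq_single_of_le_single {u : Fin n →₀ ℕ} {i : Fin n} {m : ℕ}
    (h : u ≤ Finsupp.single i m) : u = Finsupp.single i (u i) := by
  ext j
  rcases eq_or_ne j i with rfl | hj
  · simp
  · have h1 := h j
    rw [Finsupp.single_apply, if_neg (fun hh => hj hh.symm)] at h1 ⊢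
    omega

section Witness
variable {I J : Ideal (MvPolynomial (Fin n) K)} {a b : Fin n → ℕ}

/-- membership characterization of the product -/
def ProdMem (I J : Ideal (MvPolynomial (Fin n) K)) : Prop :=
  ∀ v, monomial v (1:K) ∈ I * J ↔
    ∃ x y, monomial x (1:K) ∈ I ∧ monomial y (1:K) ∈ J ∧ x + y ≤ v

lemma no_pure (hmem : ProdMem I J)
    (haMin : ∀ i k, monomial (Finsupp.single i k) (1:K) ∈ I → a i ≤ k)
    (hbMin : ∀ i k, monomial (Finsupp.single i k) (1:K) ∈ J → b i ≤ k)
    (i : Fin n) (c : ℕ) (hc : monomial (Finsupp.single i c) (1:K) ∈ I * J) :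
    a i + b i ≤ c := by
  obtain ⟨x, y, hx, hy, hle⟩ := (hmem _).1 hc
  have hxle : x ≤ Finsupp.single i c := le_trans le_self_add hle
  have hyle : y ≤ Finsupp.single i c := le_trans le_add_self hle
  have hx' := haMin i (x i) (by rwa [← eq_single_of_le_single hxle])
  have hy' := hbMin i (y i) (by rwa [← eq_single_of_le_single hyle])
  have h1 := hle i
  simp only [Finsupp.add_apply, Finsupp.single_eq_same] at h1
  omega

lemma pure_witness (hmem : ProdMem I J)
    (haI : ∀ i, monomial (Finsupp.single i (a i)) (1:K) ∈ I)
    (hbJ : ∀ i, monomial (Finsupp.single i (b i)) (1:K) ∈ J)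
    (haMin : ∀ i k, monomial (Finsupp.single i k) (1:K) ∈ I → a i ≤ k)
    (hbMin : ∀ i k, monomial (Finsupp.single i k) (1:K) ∈ J → b i ≤ k)
    (i : Fin n) :
    monomial (Finsupp.single i (a i + b i)) (1:K) ∈ I * J ∧
      ∀ u, u ≤ Finsupp.single i (a i + b i) → monomial u (1:K) ∈ I * J →
        u = Finsupp.single i (a i + b i) := by
  constructor
  · exact (hmem _).2 ⟨Finsupp.single i (a i), Finsupp.single i (b i), haI i, hbJ i,
      by rw [← Finsupp.single_add]⟩
  · intro u hu humem
    have h1 := eq_single_of_le_single hu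
    rw [h1] at humem
    have h2 := no_pure hmem haMin hbMin i (u i) humem
    have h3 := hu i
    simp only [Finsupp.single_eq_same] at h3
    rw [h1]
    congr 1
    omega

lemma pair_witness (hmem : ProdMem I J)
    (haI : ∀ i, monomial (Finsupp.single i (a i)) (1:K) ∈ I)
    (hbJ : ∀ i, monomial (Finsupp.single i (b i)) (1:K) ∈ J)
    (haMin : ∀ i k, monomial (Finsupp.single i k) (1:K) ∈ I → a i ≤ k)
    (hbMin : ∀ i k, monomial (Finsupp.single i k) (1:K) ∈ J → b i ≤ k)
    (haPos : ∀ i, 0 < a i) (hbPos : ∀ i, 0 < b i)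
    (i j : Fin n) (hij : i ≠ j) :
    ∃ w, (monomial w (1:K) ∈ I * J ∧
        ∀ u, u ≤ w → monomial u (1:K) ∈ I * J → u = w) ∧
      w.support = {i, j} := by
  set w0 : Fin n →₀ ℕ := Finsupp.single i (a i) + Finsupp.single j (b j) with hw0
  have hw0mem : monomial w0 (1:K) ∈ I * J :=
    (hmem _).2 ⟨Finsupp.single i (a i), Finsupp.single j (b j), haI i, hbJ j, le_rfl⟩
  obtain ⟨w, hwle, hwmem, hwmin⟩ :=
    exists_minimal (fun u => monomial u (1:K) ∈ I * J) (∑ k, w0 k) w0 le_rfl hw0mem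
  refine ⟨w, ⟨hwmem, fun u hu humem => hwmin u hu humem⟩, ?_⟩
  have hi : w i ≠ 0 := by
    intro h0
    have hle : w ≤ Finsupp.single j (b j) := by
      intro k
      have hk := hwle k
      rw [hw0, Finsupp.add_apply] at hk
      simp only [Finsupp.single_apply] at hk ⊢
      rcases eq_or_ne i k with rfl | hik
      · simp [h0]
      · rw [if_neg hik, zero_add] at hk
        exact hk
    have h1 := eq_single_of_le_single hle
    rw [h1] at hwmem
    have h2 := no_pure hmem haMin hbMin j (w j) hwmem
    have h3 := hle j
    simp only [Finsupp.single_eq_same] at h3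
    have := haPos j
    omega
  have hj : w j ≠ 0 := by
    intro h0
    have hle : w ≤ Finsupp.single i (a i) := by
      intro k
      have hk := hwle k
      rw [hw0, Finsupp.add_apply] at hk
      simp only [Finsupp.single_apply] at hk ⊢
      rcases eq_or_ne j k with rfl | hjk
      · simp [h0]
      · rw [if_neg hjk, add_zero] at hk
        exact hk
    have h1 := eq_single_of_le_single hle
    rw [h1] at hwmem
    have h2 := no_pure hmem haMin hbMin i (w i) hwmem
    have h3 := hle i
    simp only [Finsupp.single_eq_same] at h3
    have := hbPos i
    omega
  ext k
  simp only [Finsupp.mem_support_iff, Finset.mem_insert, Finset.mem_singleton]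
  constructor
  · intro hk
    by_contra hc
    push_neg at hc
    have hk2 := hwle k
    rw [hw0, Finsupp.add_apply] at hk2
    simp only [Finsupp.single_apply] at hk2
    rw [if_neg (Ne.symm hc.1), if_neg (Ne.symm hc.2)] at hk2
    omega
  · rintro (rfl | rfl) <;> assumption

end Witness

end MuAux
end MuAuxSection

/-- Proposition 5.3: for monomial ideals `I, J ⊂ K[x₁,…,xₙ]` of height `n` (with `n ≥ 2`)
one has `μ(IJ) ≥ n + (n choose 2)`. -/
theorem numGen_mul_ge_of_max_height {K : Type*} [Field K] {n : ℕ} (hn : 2 ≤ n)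
    (I J : Ideal (MvPolynomial (Fin n) K))
    (hImon : IsMonomialIdeal I) (hJmon : IsMonomialIdeal J)
    (hIht : HasMaxHeight I) (hJht : HasMaxHeight J) :
    n + n.choose 2 ≤ mu (I * J) := by
  letI instF : Fintype {t : Finset (Fin n) // t ∈ Finset.univ.powersetCard 2} :=
    Finset.Subtype.fintype (Finset.univ.powersetCard 2)
  obtain ⟨SI, hSI⟩ := hImon
  obtain ⟨SJ, hSJ⟩ := hJmon
  have hprod : I * J = Ideal.span ((fun v => monomial v (1:K)) '' (SI + SJ)) := by
    rw [hSI, hSJ, MuAux.span_mono_mul]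
  have hmem : MuAux.ProdMem I J := by
    intro v
    constructor
    · intro h
      rw [hprod, MuAux.monomial_mem_span_iff] at h
      obtain ⟨t, ⟨x, hx, y, hy, rfl⟩, hle⟩ := h
      exact ⟨x, y, by rw [hSI]; exact Ideal.subset_span ⟨x, hx, rfl⟩,
        by rw [hSJ]; exact Ideal.subset_span ⟨y, hy, rfl⟩, hle⟩
    · rintro ⟨x, y, hx, hy, hle⟩
      refine MuAux.mono_mem_of_le hle ?_
      have h2 := Ideal.mul_mem_mul hx hy
      rwa [monomial_mul, one_mul] at h2
  -- minimal pure powers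
  have haS : ∀ i : Fin n, {k | monomial (Finsupp.single i k) (1:K) ∈ I}.Nonempty := by
    intro i
    obtain ⟨k, _, hk⟩ := hIht.2 i
    rw [X_pow_eq_monomial] at hk
    exact ⟨k, hk⟩
  have hbS : ∀ i : Fin n, {k | monomial (Finsupp.single i k) (1:K) ∈ J}.Nonempty := by
    intro i
    obtain ⟨k, _, hk⟩ := hJht.2 i
    rw [X_pow_eq_monomial] at hk
    exact ⟨k, hk⟩
  set a : Fin n → ℕ := fun i => sInf {k | monomial (Finsupp.single i k) (1:K) ∈ I} with ha
  set b : Fin n → ℕ := fun i => sInf {k | monomial (Finsupp.single i k) (1:K) ∈ J} with hb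
  have haI : ∀ i, monomial (Finsupp.single i (a i)) (1:K) ∈ I := fun i => Nat.sInf_mem (haS i)
  have hbJ : ∀ i, monomial (Finsupp.single i (b i)) (1:K) ∈ J := fun i => Nat.sInf_mem (hbS i)
  have haMin : ∀ i k, monomial (Finsupp.single i k) (1:K) ∈ I → a i ≤ k :=
    fun i k hk => Nat.sInf_le hk
  have hbMin : ∀ i k, monomial (Finsupp.single i k) (1:K) ∈ J → b i ≤ k :=
    fun i k hk => Nat.sInf_le hk
  have haPos : ∀ i, 0 < a i := by
    intro i
    rcases Nat.eq_zero_or_pos (a i) with h0 | h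
    · exfalso
      have h1 := haI i
      rw [h0, Finsupp.single_zero] at h1
      apply hIht.1
      rw [Ideal.eq_top_iff_one]
      simpa using h1
    · exact h
  have hbPos : ∀ i, 0 < b i := by
    intro i
    rcases Nat.eq_zero_or_pos (b i) with h0 | h
    · exfalso
      have h1 := hbJ i
      rw [h0, Finsupp.single_zero] at h1
      apply hJht.1
      rw [Ideal.eq_top_iff_one]
      have h2 : J = ⊤ := by rw [Ideal.eq_top_iff_one]; simpa using h1
      rw [h2]; trivial
    · exact h
  -- witnesses
  have hpair : ∀ t : {t : Finset (Fin n) // t ∈ Finset.univ.powersetCard 2},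
      ∃ w : Fin n →₀ ℕ, ((monomial w (1:K) ∈ I * J ∧
        ∀ u, u ≤ w → monomial u (1:K) ∈ I * J → u = w) ∧ w.support = (t : Finset (Fin n))) := by
    rintro ⟨t, ht⟩
    rw [Finset.mem_powersetCard_univ] at ht
    obtain ⟨i, j, hij, rfl⟩ := Finset.card_eq_two.1 ht
    obtain ⟨w, hw1, hw2⟩ := MuAux.pair_witness hmem haI hbJ haMin hbMin haPos hbPos i j hij
    exact ⟨w, hw1, hw2⟩
  choose wp hwp hsupp using hpair
  set W : (Fin n) ⊕ {t : Finset (Fin n) // t ∈ Finset.univ.powersetCard 2} → (Fin n →₀ ℕ) :=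
    Sum.elim (fun i => Finsupp.single i (a i + b i)) (fun t => wp t) with hW
  have hsupp1 : ∀ i : Fin n, (Finsupp.single i (a i + b i)).support = {i} := by
    intro i
    apply Finsupp.support_single_ne_zero
    have := haPos i; have := hbPos i; omega
  have hcard2 : ∀ t : {t : Finset (Fin n) // t ∈ Finset.univ.powersetCard 2},
      (t : Finset (Fin n)).card = 2 := by
    rintro ⟨t, ht⟩
    rwa [Finset.mem_powersetCard_univ] at ht
  have Winj : Function.Injective W := by
    rintro (i | t) (i' | t') h
    · have h2 := congrArg Finsupp.support h
      simp only [hW, Sum.elim_inl, hsupp1] at h2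
      rw [Finset.singleton_inj] at h2
      rw [h2]
    · exfalso
      have h2 := congrArg Finsupp.support h
      simp only [hW, Sum.elim_inl, Sum.elim_inr, hsupp1, hsupp] at h2
      have := hcard2 t'
      rw [← h2] at this
      simp at this
    · exfalso
      have h2 := congrArg Finsupp.support h
      simp only [hW, Sum.elim_inl, Sum.elim_inr, hsupp1, hsupp] at h2
      have := hcard2 t
      rw [h2] at this
      simp at this
    · have h2 := congrArg Finsupp.support h
      simp only [hW, Sum.elim_inr, hsupp] at h2
      congr 1
      exact Subtype.ext h2
  have hWmem : ∀ x, monomial (W x) (1:K) ∈ I * J := by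
    rintro (i | t)
    · exact (MuAux.pure_witness hmem haI hbJ haMin hbMin i).1
    · exact (hwp t).1
  have hWmin : ∀ x u, u ≤ W x → monomial u (1:K) ∈ I * J → u = W x := by
    rintro (i | t) u hu humem
    · exact (MuAux.pure_witness hmem haI hbJ haMin hbMin i).2 u hu humem
    · exact (hwp t).2 u hu humem
  have hcardι : Fintype.card ((Fin n) ⊕ {t : Finset (Fin n) // t ∈ Finset.univ.powersetCard 2})
      = n + n.choose 2 := by
    rw [Fintype.card_sum, Fintype.card_fin,
      Fintype.card_of_subtype (Finset.univ.powersetCard 2) (fun x => Iff.rfl),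
      Finset.card_powersetCard, Finset.card_univ, Fintype.card_fin]
  -- conclude via mu
  have hfg : (I * J).FG := IsNoetherian.noetherian _
  obtain ⟨s0, hs0⟩ := hfg
  refine le_csInf ⟨s0.card, s0, rfl, hs0⟩ ?_
  rintro m ⟨s, rfl, hs⟩
  rw [← hcardι]
  exact MuAux.card_le_of_witnesses hprod s hs W Winj hWmem hWmin
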